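/- arXiv:2502.08614 — 6 statements merged into one kernel-verified Lean document; each statement's English description precedes it below -/
import Mathlib

section
/- Let F, F0, F1 be cumulative distribution functions on the reals with F(y) = (1-p)·F0(y) + p·F1(y) for all y, where p ∈ (0,1]. Then for every y, F1(y) is bounded below by max{0, (F(y)-(1-p))/p} and above by min{F(y)/p, 1}. -/
open Filter Topology


lemma cdf_bounds {f : ℝ → ℝ} (hf : Monotone f)
    (hbot : Tendsto f atBot (𝓝 0)) (htop : Tendsto f atTop (𝓝 1)) (y : ℝ) :
    0 ≤ f y ∧ f y ≤ 1 := by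
  constructor
  · exact le_of_tendsto hbot (Filter.eventually_atBot.2 ⟨y, fun x hx => hf hx⟩)
  · exact ge_of_tendsto htop (Filter.eventually_atTop.2 ⟨y, fun x hx => hf hx⟩)

/-- Horowitz–Manski (1995) Proposition 2: bounds on a mixture component CDF. -/
theorem stmt_0
    (F F0 F1 : ℝ → ℝ) (p : ℝ) (hp : p ∈ Set.Ioc (0 : ℝ) 1)
    (hF : Monotone F) (hF0 : Monotone F0) (hF1 : Monotone F1)
    (hFbot : Tendsto F atBot (𝓝 0)) (hFtop : Tendsto F atTop (𝓝 1))
    (hF0bot : Tendsto F0 atBot (𝓝 0)) (hF0top : Tendsto F0 atTop (𝓝 1))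
    (hF1bot : Tendsto F1 atBot (𝓝 0)) (hF1top : Tendsto F1 atTop (𝓝 1))
    (hFrc : ∀ y, ContinuousWithinAt F (Set.Ici y) y)
    (hF0rc : ∀ y, ContinuousWithinAt F0 (Set.Ici y) y)
    (hF1rc : ∀ y, ContinuousWithinAt F1 (Set.Ici y) y)
    (hmix : ∀ y, F y = (1 - p) * F0 y + p * F1 y) :
    ∀ y, max 0 ((F y - (1 - p)) / p) ≤ F1 y ∧ F1 y ≤ min (F y / p) 1 := by
  intro y
  obtain ⟨hp0, hp1⟩ := hp
  obtain ⟨h00, h01⟩ := cdf_bounds hF0 hF0bot hF0top y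
  obtain ⟨h10, h11⟩ := cdf_bounds hF1 hF1bot hF1top y
  have hm := hmix y
  constructor
  · apply max_le h10
    rw [div_le_iff₀ hp0]
    nlinarith
  · apply le_min _ h11
    rw [le_div_iff₀ hp0]
    nlinarith
end

section
/- Let Y be a real random variable whose law is a mixture ν = (1-p)·ν0 + p·ν1 with p ∈ (0,1], where ν1 is the law of a component Y1. For any q ∈ (0,1), the q-quantile of ν1 satisfies F⁻¹(q·p) ≤ F1⁻¹(q) ≤ F⁻¹(q·p + 1 - p), where F and F1 are the CDFs of ν and ν1 and F⁻¹(u) = inf{y : F(y) ≥ u} is the generalized inverse. -/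
open MeasureTheory

/-- The CDF of a measure on `ℝ`. -/
noncomputable def cdfOf (ν : Measure ℝ) (y : ℝ) : ℝ := (ν (Set.Iic y)).toReal

/-- Generalized inverse (left-continuous quantile function) of a CDF. -/
noncomputable def qtl (F : ℝ → ℝ) (u : ℝ) : ℝ := sInf {y : ℝ | u ≤ F y}

/-!
Write `F = (1 - p) F₀ + p F₁`. Since `0 ≤ F₀ ≤ 1`, we have `p F₁ ≤ F ≤ (1 - p) + p F₁`
pointwise. Hence `F₁(y) ≥ q` forces `F(y) ≥ q p`, and `F(y) ≥ q p + 1 - p` forces `F₁(y) ≥ q`;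
the quantile bounds follow because the generalized inverse is antitone in the defining set.
-/

open ProbabilityTheory

lemma cdfOf_eq_cdf (μ : Measure ℝ) [IsProbabilityMeasure μ] : cdfOf μ = cdf μ := by
  funext y
  rw [cdfOf, cdf_eq_real, measureReal_def]

lemma cdfOf_nonneg (μ : Measure ℝ) (y : ℝ) : 0 ≤ cdfOf μ y := ENNReal.toReal_nonneg

lemma cdfOf_le_one (μ : Measure ℝ) [IsProbabilityMeasure μ] (y : ℝ) : cdfOf μ y ≤ 1 := by
  rw [cdfOf_eq_cdf]
  exact cdf_le_one μ y

lemma cdfOf_ofReal_smul_add_ofReal_smul (μ₀ μ₁ : Measure ℝ) [IsFiniteMeasure μ₀]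
    [IsFiniteMeasure μ₁] {a b : ℝ} (ha : 0 ≤ a) (hb : 0 ≤ b) (y : ℝ) :
    cdfOf (ENNReal.ofReal a • μ₀ + ENNReal.ofReal b • μ₁) y = a * cdfOf μ₀ y + b * cdfOf μ₁ y := by
  simp only [cdfOf, Measure.add_apply, Measure.smul_apply, smul_eq_mul]
  rw [ENNReal.toReal_add (by finiteness) (by finiteness), ENNReal.toReal_mul, ENNReal.toReal_mul,
    ENNReal.toReal_ofReal ha, ENNReal.toReal_ofReal hb]

lemma bddBelow_setOf_le_cdfOf (μ : Measure ℝ) [IsProbabilityMeasure μ] {u : ℝ} (hu : 0 < u) :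
    BddBelow {y | u ≤ cdfOf μ y} := by
  obtain ⟨b, hb⟩ := Filter.eventually_atBot.1 ((tendsto_cdf_atBot μ).eventually (gt_mem_nhds hu))
  refine ⟨b, fun y hy => le_of_not_gt fun hyb => ?_⟩
  have hy : u ≤ cdf μ y := by rwa [← cdfOf_eq_cdf]
  exact (hb y hyb.le).not_ge hy

lemma nonempty_setOf_le_cdfOf (μ : Measure ℝ) [IsProbabilityMeasure μ] {u : ℝ} (hu : u < 1) :
    {y | u ≤ cdfOf μ y}.Nonempty := by
  obtain ⟨y, hy⟩ := ((tendsto_cdf_atTop μ).eventually (lt_mem_nhds hu)).exists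
  exact ⟨y, show u ≤ cdfOf μ y by rw [cdfOf_eq_cdf]; exact hy.le⟩

lemma qtl_cdfOf_le_qtl_cdfOf {μ μ' : Measure ℝ} [IsProbabilityMeasure μ]
    [IsProbabilityMeasure μ'] {u v : ℝ} (hu : u < 1) (hv : 0 < v)
    (h : ∀ y, u ≤ cdfOf μ y → v ≤ cdfOf μ' y) :
    qtl (cdfOf μ') v ≤ qtl (cdfOf μ) u :=
  csInf_le_csInf (bddBelow_setOf_le_cdfOf μ' hv) (nonempty_setOf_le_cdfOf μ hu) h

/-- Horowitz–Manski (1995) Proposition 3: quantile bounds for a mixture component. -/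
theorem stmt_1
    (ν ν0 ν1 : Measure ℝ) [IsProbabilityMeasure ν] [IsProbabilityMeasure ν0]
    [IsProbabilityMeasure ν1] (p : ℝ) (hp : p ∈ Set.Ioc (0 : ℝ) 1)
    (hmix : ν = ENNReal.ofReal (1 - p) • ν0 + ENNReal.ofReal p • ν1)
    (q : ℝ) (hq : q ∈ Set.Ioo (0 : ℝ) 1) :
    qtl (cdfOf ν) (q * p) ≤ qtl (cdfOf ν1) q ∧
      qtl (cdfOf ν1) q ≤ qtl (cdfOf ν) (q * p + 1 - p) := by
  obtain ⟨hp0, hp1⟩ := hp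
  obtain ⟨hq0, hq1⟩ := hq
  have hF y : cdfOf ν y = (1 - p) * cdfOf ν0 y + p * cdfOf ν1 y := by
    rw [hmix, cdfOf_ofReal_smul_add_ofReal_smul ν0 ν1 (by linarith) hp0.le]
  constructor
  · refine qtl_cdfOf_le_qtl_cdfOf hq1 (by positivity) fun y hy => ?_
    have hF0 := cdfOf_nonneg ν0 y
    rw [hF]
    nlinarith
  · refine qtl_cdfOf_le_qtl_cdfOf (by nlinarith) hq0 fun y hy => ?_
    have hF0 := cdfOf_le_one ν0 y
    rw [hF] at hy
    have hqp : q * p ≤ cdfOf ν1 y * p := by nlinarith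
    exact le_of_mul_le_mul_right hqp hp0
end

section
/- Let Y be an integrable real random variable with continuous CDF F that is a mixture F = (1-p)F0 + pF1 with mixing probability p ∈ (0,1], where F1 is the CDF of an integrable component with finite mean μ1 = ∫ y dF1(y). Let y_p = F⁻¹(p) be the p-quantile of F. Then the mean of Y conditional on Y ≤ y_p, i.e., (1/p)·∫_{(-∞, y_p]} y dF(y), is less than or equal to μ1, and the mean of Y conditional on Y ≥ F⁻¹(1-p) is greater than or equal to μ1. -/
/-!
Truncate at a level `a`. On the component `ν0` the variable `min Y a` is at most `a`, on `ν1` it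
is at most `Y`, so `∫_{Y ≤ a} Y dν + a ν(Y > a) = E_ν[min Y a] ≤ (1 - p) a + p μ1`. When `a` is
the `p`-quantile of the continuous CDF, `ν(Y > a) = 1 - p` and the bound reads
`∫_{Y ≤ a} Y dν ≤ p μ1`. The upper tail is the mirror image with `max Y a`, where continuity
also rules out an atom at the quantile.
-/

open MeasureTheory

open Set

theorem apply_qtl_eq_or_qtl_eq_zero {F : ℝ → ℝ} (hF : Continuous F) (u : ℝ) :
    F (qtl F u) = u ∨ qtl F u = 0 := by
  set S := {y : ℝ | u ≤ F y}
  by_cases hS : S.Nonempty ∧ BddBelow S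
  · left
    have hq_mem : qtl F u ∈ S := (isClosed_le continuous_const hF).csInf_mem hS.1 hS.2
    refine le_antisymm ?_ hq_mem
    refine le_of_tendsto ((hF.tendsto _).mono_left (nhdsWithin_le_nhds (s := Iio (qtl F u)))) ?_
    filter_upwards [self_mem_nhdsWithin] with y (hy : y < qtl F u)
    exact le_of_lt (not_le.mp fun h => (csInf_le hS.2 h).not_gt hy)
  · right
    rcases not_and_or.mp hS with hS | hS
    · exact (congrArg sInf (not_nonempty_iff_eq_empty.mp hS)).trans Real.sInf_empty
    · exact Real.sInf_of_not_bddBelow hS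

theorem measureReal_Ioi_eq_one_sub_cdfOf {ν : Measure ℝ} [IsProbabilityMeasure ν] (a : ℝ) :
    ν.real (Ioi a) = 1 - cdfOf ν a := by
  rw [← compl_Iic, measureReal_compl measurableSet_Iic, probReal_univ]
  rfl

theorem measureReal_Iio_eq_cdfOf {ν : Measure ℝ} [IsProbabilityMeasure ν]
    (hcont : Continuous (cdfOf ν)) (a : ℝ) : ν.real (Iio a) = cdfOf ν a := by
  have hcdf : cdfOf ν = ProbabilityTheory.cdf ν := by
    funext y; exact (ProbabilityTheory.cdf_eq_real ν y).symm
  have hatom : ν {a} = 0 := by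
    rw [← ProbabilityTheory.measure_cdf ν, StieltjesFunction.measure_singleton, ← hcdf,
      hcont.continuousWithinAt.leftLim_eq, sub_self, ENNReal.ofReal_zero]
  exact measureReal_congr (Iio_ae_eq_Iic' hatom)

theorem integral_ofReal_smul_add_ofReal_smul_measure {α E : Type*} [MeasurableSpace α]
    [NormedAddCommGroup E] [NormedSpace ℝ E] {μ ν : Measure α} {f : α → E} {a b : ℝ}
    (ha : 0 ≤ a) (hb : 0 ≤ b) (hμ : Integrable f μ) (hν : Integrable f ν) :
    ∫ x, f x ∂(ENNReal.ofReal a • μ + ENNReal.ofReal b • ν) =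
      a • ∫ x, f x ∂μ + b • ∫ x, f x ∂ν := by
  rw [integral_add_measure (hμ.smul_measure ENNReal.ofReal_ne_top)
    (hν.smul_measure ENNReal.ofReal_ne_top), integral_smul_measure, integral_smul_measure,
    ENNReal.toReal_ofReal ha, ENNReal.toReal_ofReal hb]

section Mixture

variable {ν ν0 ν1 : Measure ℝ} [IsProbabilityMeasure ν0] [IsFiniteMeasure ν1] {p : ℝ}

theorem setIntegral_Iic_add_le_of_mixture (hp0 : 0 ≤ p) (hp1 : p ≤ 1)
    (hmix : ν = ENNReal.ofReal (1 - p) • ν0 + ENNReal.ofReal p • ν1)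
    (hint0 : Integrable id ν0) (hint1 : Integrable id ν1) (a : ℝ) :
    ∫ y in Iic a, y ∂ν + a * ν.real (Ioi a) ≤ (1 - p) * a + p * ∫ y, y ∂ν1 := by
  have hmin : ∀ (μ : Measure ℝ) [IsFiniteMeasure μ], Integrable id μ →
      Integrable (fun y => min y a) μ :=
    fun μ _ h => h.inf (integrable_const a)
  have hminν : Integrable (fun y => min y a) ν := hmix ▸
    ((hmin ν0 hint0).smul_measure ENNReal.ofReal_ne_top).add_measure
      ((hmin ν1 hint1).smul_measure ENNReal.ofReal_ne_top)
  have hsplit : ∫ y, min y a ∂ν = ∫ y in Iic a, y ∂ν + a * ν.real (Ioi a) := by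
    rw [← integral_add_compl measurableSet_Iic hminν, compl_Iic,
      setIntegral_congr_fun measurableSet_Iic fun y (hy : y ≤ a) => min_eq_left hy,
      setIntegral_congr_fun measurableSet_Ioi fun y (hy : a < y) => min_eq_right hy.le,
      setIntegral_const, smul_eq_mul, mul_comm]
  have hmix_int : ∫ y, min y a ∂ν = (1 - p) * ∫ y, min y a ∂ν0 + p * ∫ y, min y a ∂ν1 := by
    rw [hmix, integral_ofReal_smul_add_ofReal_smul_measure (by linarith) hp0 (hmin ν0 hint0)
      (hmin ν1 hint1), smul_eq_mul, smul_eq_mul]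
  have h0 : ∫ y, min y a ∂ν0 ≤ a := by
    simpa using integral_mono (hmin ν0 hint0) (integrable_const a) fun y => min_le_right y a
  have h1 : ∫ y, min y a ∂ν1 ≤ ∫ y, y ∂ν1 :=
    integral_mono (hmin ν1 hint1) hint1 fun y => min_le_left y a
  rw [← hsplit, hmix_int]
  gcongr

theorem le_setIntegral_Ici_add_of_mixture (hp0 : 0 ≤ p) (hp1 : p ≤ 1)
    (hmix : ν = ENNReal.ofReal (1 - p) • ν0 + ENNReal.ofReal p • ν1)
    (hint0 : Integrable id ν0) (hint1 : Integrable id ν1) (a : ℝ) :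
    (1 - p) * a + p * ∫ y, y ∂ν1 ≤ ∫ y in Ici a, y ∂ν + a * ν.real (Iio a) := by
  have hmax : ∀ (μ : Measure ℝ) [IsFiniteMeasure μ], Integrable id μ →
      Integrable (fun y => max y a) μ :=
    fun μ _ h => h.sup (integrable_const a)
  have hmaxν : Integrable (fun y => max y a) ν := hmix ▸
    ((hmax ν0 hint0).smul_measure ENNReal.ofReal_ne_top).add_measure
      ((hmax ν1 hint1).smul_measure ENNReal.ofReal_ne_top)
  have hsplit : ∫ y, max y a ∂ν = ∫ y in Ici a, y ∂ν + a * ν.real (Iio a) := by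
    rw [← integral_add_compl measurableSet_Ici hmaxν, compl_Ici,
      setIntegral_congr_fun measurableSet_Ici fun y (hy : a ≤ y) => max_eq_left hy,
      setIntegral_congr_fun measurableSet_Iio fun y (hy : y < a) => max_eq_right hy.le,
      setIntegral_const, smul_eq_mul, mul_comm]
  have hmix_int : ∫ y, max y a ∂ν = (1 - p) * ∫ y, max y a ∂ν0 + p * ∫ y, max y a ∂ν1 := by
    rw [hmix, integral_ofReal_smul_add_ofReal_smul_measure (by linarith) hp0 (hmax ν0 hint0)
      (hmax ν1 hint1), smul_eq_mul, smul_eq_mul]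
  have h0 : a ≤ ∫ y, max y a ∂ν0 := by
    simpa using integral_mono (integrable_const a) (hmax ν0 hint0) fun y => le_max_right y a
  have h1 : ∫ y, y ∂ν1 ≤ ∫ y, max y a ∂ν1 :=
    integral_mono hint1 (hmax ν1 hint1) fun y => le_max_left y a
  rw [← hsplit, hmix_int]
  gcongr

end Mixture

theorem stmt_2_general
    (ν ν0 ν1 : Measure ℝ) [IsProbabilityMeasure ν] [IsProbabilityMeasure ν0]
    [IsProbabilityMeasure ν1] (p : ℝ) (hp : p ∈ Set.Ioc (0 : ℝ) 1)
    (hmix : ν = ENNReal.ofReal (1 - p) • ν0 + ENNReal.ofReal p • ν1)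
    (hcont : Continuous (cdfOf ν))
    (hint0 : Integrable id ν0) (hint1 : Integrable id ν1) :
    (1 / p) * ∫ y in Set.Iic (qtl (cdfOf ν) p), y ∂ν ≤ ∫ y, y ∂ν1 ∧
      ∫ y, y ∂ν1 ≤ (1 / p) * ∫ y in Set.Ici (qtl (cdfOf ν) (1 - p)), y ∂ν := by
  obtain ⟨hp0, hp1⟩ := hp
  have hlower := setIntegral_Iic_add_le_of_mixture hp0.le hp1 hmix hint0 hint1 (qtl (cdfOf ν) p)
  have hupper := le_setIntegral_Ici_add_of_mixture hp0.le hp1 hmix hint0 hint1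
    (qtl (cdfOf ν) (1 - p))
  rw [measureReal_Ioi_eq_one_sub_cdfOf] at hlower
  rw [measureReal_Iio_eq_cdfOf hcont] at hupper
  -- The junk value `qtl F u = 0` is harmless: the quantile only enters through `a * (F a - u)`.
  have ha := apply_qtl_eq_or_qtl_eq_zero hcont p
  have hb := apply_qtl_eq_or_qtl_eq_zero hcont (1 - p)
  generalize qtl (cdfOf ν) p = a at *
  generalize qtl (cdfOf ν) (1 - p) = b at *
  have ha' : a * (cdfOf ν a - p) = 0 := by rcases ha with h | h <;> simp [h]
  have hb' : b * (cdfOf ν b - (1 - p)) = 0 := by rcases hb with h | h <;> simp [h]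
  rw [one_div, inv_mul_le_iff₀ hp0, le_inv_mul_iff₀ hp0]
  constructor <;> linarith

/-- Horowitz–Manski (1995) Proposition 4: trimmed means bound the component mean. -/
theorem stmt_2
    (ν ν0 ν1 : Measure ℝ) [IsProbabilityMeasure ν] [IsProbabilityMeasure ν0]
    [IsProbabilityMeasure ν1] (p : ℝ) (hp : p ∈ Set.Ioc (0 : ℝ) 1)
    (hmix : ν = ENNReal.ofReal (1 - p) • ν0 + ENNReal.ofReal p • ν1)
    (hcont : Continuous (cdfOf ν))
    (hint : Integrable id ν) (hint0 : Integrable id ν0) (hint1 : Integrable id ν1) :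
    (1 / p) * ∫ y in Set.Iic (qtl (cdfOf ν) p), y ∂ν ≤ ∫ y, y ∂ν1 ∧
      ∫ y, y ∂ν1 ≤ (1 / p) * ∫ y in Set.Ici (qtl (cdfOf ν) (1 - p)), y ∂ν :=
  stmt_2_general ν ν0 ν1 p hp hmix hcont hint0 hint1
end

section
/- Let two mutually exclusive sources of selection satisfy the no-intersection assumption, source-specific positive monotonicity for source 1 (s¹(1) ≥ s¹(0)) and negative monotonicity for source 2 (s²(1) ≤ s²(0)). Then for the overall selection S(w) = s¹(w)s²(w): Pr(V = OT) = Pr(s¹(0)=0, s¹(1)=1), Pr(V = OC) = Pr(s²(0)=1, s²(1)=0), and Pr(V = NO) = Pr(s¹(0)=s¹(1)=0) + Pr(s²(0)=s²(1)=0), where V denotes the principal stratum determined by (S(1),S(0)). -/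
open MeasureTheory

/-- Intermediate step in the proof of Proposition 5: with two mutually exclusive
sources (source 1 positively monotone, source 2 negatively monotone) and no
intersection of OC and OT strata, the overall OT, OC and NO strata proportions are
identified from the source-wise strata. `S(w) = s1(w) * s2(w)`. -/
theorem stmt_12 {Ω : Type*} [MeasurableSpace Ω] (μ : Measure Ω) [IsProbabilityMeasure μ]
    (s10 s11 s20 s21 : Ω → ℕ)
    (hm10 : Measurable s10) (hm11 : Measurable s11)
    (hm20 : Measurable s20) (hm21 : Measurable s21)
    (hvals : ∀ᵐ ω ∂μ, s10 ω ≤ 1 ∧ s11 ω ≤ 1 ∧ s20 ω ≤ 1 ∧ s21 ω ≤ 1)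
    (hexcl : ∀ᵐ ω ∂μ, 1 ≤ s10 ω + s20 ω ∧ 1 ≤ s11 ω + s21 ω)
    (hnox : ∀ᵐ ω ∂μ, ¬(s10 ω = 0 ∧ s11 ω = 1 ∧ s20 ω = 1 ∧ s21 ω = 0) ∧
      ¬(s20 ω = 0 ∧ s21 ω = 1 ∧ s10 ω = 1 ∧ s11 ω = 0))
    (hmono1 : ∀ᵐ ω ∂μ, s10 ω ≤ s11 ω)
    (hmono2 : ∀ᵐ ω ∂μ, s21 ω ≤ s20 ω) :
    μ {ω | s10 ω * s20 ω = 0 ∧ s11 ω * s21 ω = 1} = μ {ω | s10 ω = 0 ∧ s11 ω = 1} ∧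
    μ {ω | s10 ω * s20 ω = 1 ∧ s11 ω * s21 ω = 0} = μ {ω | s20 ω = 1 ∧ s21 ω = 0} ∧
    μ {ω | s10 ω * s20 ω = 0 ∧ s11 ω * s21 ω = 0}
      = μ {ω | s10 ω = 0 ∧ s11 ω = 0} + μ {ω | s20 ω = 0 ∧ s21 ω = 0} := by
  have h1 : {ω | s10 ω * s20 ω = 0 ∧ s11 ω * s21 ω = 1} =ᵐ[μ] {ω | s10 ω = 0 ∧ s11 ω = 1} := by
    rw [Filter.eventuallyEq_set]
    filter_upwards [hvals, hexcl, hnox, hmono1, hmono2] with ω hv he hn h1 h2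
    simp only [Set.mem_setOf_eq, Nat.mul_eq_zero, mul_eq_one]
    omega
  have h2 : {ω | s10 ω * s20 ω = 1 ∧ s11 ω * s21 ω = 0} =ᵐ[μ] {ω | s20 ω = 1 ∧ s21 ω = 0} := by
    rw [Filter.eventuallyEq_set]
    filter_upwards [hvals, hexcl, hnox, hmono1, hmono2] with ω hv he hn h1 h2
    simp only [Set.mem_setOf_eq, Nat.mul_eq_zero, mul_eq_one]
    omega
  have h3 : {ω | s10 ω * s20 ω = 0 ∧ s11 ω * s21 ω = 0} =ᵐ[μ]
      (({ω | s10 ω = 0 ∧ s11 ω = 0} ∪ {ω | s20 ω = 0 ∧ s21 ω = 0} : Set Ω)) := by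
    rw [Filter.eventuallyEq_set]
    filter_upwards [hvals, hexcl, hnox, hmono1, hmono2] with ω hv he hn h1 h2
    simp only [Set.mem_setOf_eq, Set.mem_union, Nat.mul_eq_zero]
    omega
  have hmB : MeasurableSet {ω | s20 ω = 0 ∧ s21 ω = 0} :=
    (hm20 (measurableSet_singleton 0)).inter (hm21 (measurableSet_singleton 0))
  have hint : μ ({ω | s10 ω = 0 ∧ s11 ω = 0} ∩ {ω | s20 ω = 0 ∧ s21 ω = 0}) = 0 := by
    refine measure_mono_null ?_ (ae_iff.mp hexcl)
    rintro ω ⟨⟨ha, -⟩, ⟨hb, -⟩⟩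
    simp only [Set.mem_setOf_eq]
    omega
  refine ⟨measure_congr h1, measure_congr h2, ?_⟩
  rw [measure_congr h3, ← measure_union_add_inter _ hmB, hint, add_zero]
end

section
/- With two sources of selection (source 1 positively monotone, source 2 negatively monotone), mutual exclusivity, no intersection of OC and OT strata, and Pr(S(1)=1 | G=1) > 0, the always-observed proportion among treated selected units satisfies π₁ = Pr(S(0)=1 | G=1, S(1)=1) = (1 - Pr(s¹(0)=0 | G=1) - Pr(s²(1)=0 | G=1)) / E[S(1) | G=1]. -/
open MeasureTheory ProbabilityTheory

private lemma nat_mul_eq_one' {m n : ℕ} (h : m * n = 1) : m = 1 ∧ n = 1 :=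
  ⟨Nat.eq_one_of_mul_eq_one_right h, Nat.eq_one_of_mul_eq_one_left h⟩

/-- Core computation in the proof of Proposition 5: with two sources of selection
(source 1 positively monotone, source 2 negatively monotone), mutual exclusivity and no
intersection of OC and OT strata, the always-observed proportion among treated selected
units is `π₁ = (1 - Pr(s¹(0)=0|G=1) - Pr(s²(1)=0|G=1)) / E[S(1)|G=1]`.
Here `S(w) = s1(w) * s2(w)` and, since `S(1)` is binary, `E[S(1)|G=1] = Pr(S(1)=1|G=1)`. -/
theorem stmt_13 {Ω : Type*} [MeasurableSpace Ω] (μ : Measure Ω) [IsProbabilityMeasure μ]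
    (s10 s11 s20 s21 : Ω → ℕ) (G : Ω → ℕ)
    (hm10 : Measurable s10) (hm11 : Measurable s11)
    (hm20 : Measurable s20) (hm21 : Measurable s21) (hmG : Measurable G)
    (hvals : ∀ᵐ ω ∂μ, s10 ω ≤ 1 ∧ s11 ω ≤ 1 ∧ s20 ω ≤ 1 ∧ s21 ω ≤ 1)
    (hexcl : ∀ᵐ ω ∂μ, 1 ≤ s10 ω + s20 ω ∧ 1 ≤ s11 ω + s21 ω)
    (hnox : ∀ᵐ ω ∂μ, ¬(s10 ω = 0 ∧ s11 ω = 1 ∧ s20 ω = 1 ∧ s21 ω = 0) ∧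
      ¬(s20 ω = 0 ∧ s21 ω = 1 ∧ s10 ω = 1 ∧ s11 ω = 0))
    (hmono1 : ∀ᵐ ω ∂μ, s10 ω ≤ s11 ω)
    (hmono2 : ∀ᵐ ω ∂μ, s21 ω ≤ s20 ω)
    (hG1 : μ {ω | G ω = 1} ≠ 0)
    (hsel : 0 < μ[|{ω | G ω = 1}] {ω | s11 ω * s21 ω = 1}) :
    (μ[|{ω | G ω = 1 ∧ s11 ω * s21 ω = 1}] {ω | s10 ω * s20 ω = 1}).toReal
      = (1 - (μ[|{ω | G ω = 1}] {ω | s10 ω = 0}).toReal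
          - (μ[|{ω | G ω = 1}] {ω | s21 ω = 0}).toReal)
        / (μ[|{ω | G ω = 1}] {ω | s11 ω * s21 ω = 1}).toReal := by
  set B : Set Ω := {ω | G ω = 1} with hB
  have hmB : MeasurableSet B := hmG (measurableSet_singleton 1)
  have hmS1 : MeasurableSet {ω | s11 ω * s21 ω = 1} :=
    (hm11.mul hm21) (measurableSet_singleton 1)
  have hm100 : MeasurableSet {ω | s10 ω = 0} := hm10 (measurableSet_singleton 0)
  have hm210 : MeasurableSet {ω | s21 ω = 0} := hm21 (measurableSet_singleton 0)
  have hC : {ω | G ω = 1 ∧ s11 ω * s21 ω = 1} = B ∩ {ω | s11 ω * s21 ω = 1} := rfl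
  have hmC : MeasurableSet (B ∩ {ω | s11 ω * s21 ω = 1}) := hmB.inter hmS1
  set R : Set Ω := {ω | s10 ω = 1 ∧ s21 ω = 1} with hR
  -- a.e. facts
  have hgood : ∀ᵐ ω ∂μ, (s10 ω ≤ 1 ∧ s11 ω ≤ 1 ∧ s20 ω ≤ 1 ∧ s21 ω ≤ 1) ∧
      (1 ≤ s10 ω + s20 ω ∧ 1 ≤ s11 ω + s21 ω) ∧
      (¬(s10 ω = 0 ∧ s11 ω = 1 ∧ s20 ω = 1 ∧ s21 ω = 0) ∧
        ¬(s20 ω = 0 ∧ s21 ω = 1 ∧ s10 ω = 1 ∧ s11 ω = 0)) ∧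
      s10 ω ≤ s11 ω ∧ s21 ω ≤ s20 ω := by
    filter_upwards [hvals, hexcl, hnox, hmono1, hmono2] with ω h1 h2 h3 h4 h5
    exact ⟨h1, h2, h3, h4, h5⟩
  have hbad : μ {ω | ¬((s10 ω ≤ 1 ∧ s11 ω ≤ 1 ∧ s20 ω ≤ 1 ∧ s21 ω ≤ 1) ∧
      (1 ≤ s10 ω + s20 ω ∧ 1 ≤ s11 ω + s21 ω) ∧
      (¬(s10 ω = 0 ∧ s11 ω = 1 ∧ s20 ω = 1 ∧ s21 ω = 0) ∧
        ¬(s20 ω = 0 ∧ s21 ω = 1 ∧ s10 ω = 1 ∧ s11 ω = 0)) ∧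
      s10 ω ≤ s11 ω ∧ s21 ω ≤ s20 ω)} = 0 := ae_iff.mp hgood
  -- numerator set equals B ∩ R a.e.
  have hnum : μ ((B ∩ {ω | s11 ω * s21 ω = 1}) ∩ {ω | s10 ω * s20 ω = 1})
      = μ (B ∩ R) := by
    apply measure_congr
    rw [Filter.eventuallyEq_set]
    filter_upwards [hgood] with ω h
    obtain ⟨⟨v10, v11, v20, v21⟩, _, _, m1, m2⟩ := h
    simp only [Set.mem_inter_iff, Set.mem_setOf_eq, hR]
    constructor
    · rintro ⟨⟨hg, h1⟩, h0⟩
      obtain ⟨e10, e20⟩ := nat_mul_eq_one' h0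
      obtain ⟨e11, e21⟩ := nat_mul_eq_one' h1
      exact ⟨hg, e10, e21⟩
    · rintro ⟨hg, e10, e21⟩
      have e11 : s11 ω = 1 := le_antisymm v11 (e10 ▸ m1)
      have e20 : s20 ω = 1 := le_antisymm v20 (e21 ▸ m2)
      exact ⟨⟨hg, by rw [e11, e21]⟩, by rw [e10, e20]⟩
  -- a.e. disjointness of {s10 = 0} and {s21 = 0}
  have hdisj : μ ((B ∩ {ω | s10 ω = 0}) ∩ (B ∩ {ω | s21 ω = 0})) = 0 := by
    refine measure_mono_null ?_ hbad
    rintro ω ⟨⟨_, e10⟩, _, e21⟩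
    simp only [Set.mem_setOf_eq] at e10 e21 ⊢
    rintro ⟨⟨v10, v11, v20, v21⟩, ⟨ex1, ex2⟩, ⟨nx1, _⟩, _, _⟩
    exact nx1 ⟨e10, by omega, by omega, e21⟩
  have hadd1 : μ (B ∩ ({ω | s10 ω = 0} ∪ {ω | s21 ω = 0}))
      = μ (B ∩ {ω | s10 ω = 0}) + μ (B ∩ {ω | s21 ω = 0}) := by
    rw [Set.inter_union_distrib_left]
    exact measure_union₀ (hmB.inter hm210).nullMeasurableSet hdisj
  -- complement within B is B ∩ R a.e.
  have hcompl : μ (B \ ({ω | s10 ω = 0} ∪ {ω | s21 ω = 0})) = μ (B ∩ R) := by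
    apply measure_congr
    rw [Filter.eventuallyEq_set]
    filter_upwards [hgood] with ω h
    obtain ⟨⟨v10, _, _, v21⟩, _, _, _, _⟩ := h
    simp only [Set.mem_diff, Set.mem_union, Set.mem_inter_iff, Set.mem_setOf_eq, hR]
    constructor
    · rintro ⟨hg, hn⟩
      push_neg at hn
      exact ⟨hg, by omega, by omega⟩
    · rintro ⟨hg, e10, e21⟩
      exact ⟨hg, by omega⟩
  have hkey : μ (B ∩ {ω | s10 ω = 0}) + μ (B ∩ {ω | s21 ω = 0}) + μ (B ∩ R) = μ B := by
    rw [← hadd1, ← hcompl]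
    exact measure_inter_add_diff B (hm100.union hm210)
  -- positivity
  have hq0 : μ (B ∩ {ω | s11 ω * s21 ω = 1}) ≠ 0 := by
    intro h
    rw [cond_apply hmB, h, mul_zero] at hsel
    exact lt_irrefl 0 hsel
  have hBt : μ B ≠ ⊤ := measure_ne_top μ B
  have hqt : μ (B ∩ {ω | s11 ω * s21 ω = 1}) ≠ ⊤ := measure_ne_top μ _
  -- rewrite the conditional probabilities
  rw [hC, cond_apply hmC, cond_apply hmB, cond_apply hmB, cond_apply hmB, hnum]
  set p := (μ B).toReal with hp
  set q := (μ (B ∩ {ω | s11 ω * s21 ω = 1})).toReal with hq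
  set a := (μ (B ∩ {ω | s10 ω = 0})).toReal with ha
  set b := (μ (B ∩ {ω | s21 ω = 0})).toReal with hb
  set r := (μ (B ∩ R)).toReal with hr
  have hppos : 0 < p := ENNReal.toReal_pos hG1 hBt
  have hqpos : 0 < q := ENNReal.toReal_pos hq0 hqt
  have hsum : a + b + r = p := by
    rw [ha, hb, hr, hp, ← ENNReal.toReal_add (measure_ne_top μ _) (measure_ne_top μ _),
      ← ENNReal.toReal_add (ENNReal.add_ne_top.mpr ⟨measure_ne_top μ _, measure_ne_top μ _⟩)
        (measure_ne_top μ _), hkey]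
  rw [ENNReal.toReal_mul, ENNReal.toReal_mul, ENNReal.toReal_mul, ENNReal.toReal_mul,
    ENNReal.toReal_inv, ENNReal.toReal_inv, ← hp, ← hq, ← ha, ← hb, ← hr]
  field_simp
  nlinarith [hsum, hppos, hqpos]
end

section
/- Suppose the sample selection is ignorable in the sense that (Y₂(w) - Y₁) is conditionally independent of the stratum V given G, for w ∈ {0,1}, and parallel trends holds: E[Y₂(0) - Y₁ | G=1] = E[Y₂(0) - Y₁ | G=0]. Then the complete-case DiD estimand E[Y₂ - Y₁ | G=1, S₂=1] - E[Y₂ - Y₁ | G=0, S₂=1] equals the ATT, E[Y₂(1) - Y₂(0) | G=1]. -/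
/-!
On the treated arm the observed selection indicator is `S₂(1)` and the observed outcome is
`Y₂(1)`; as `Y₂(1) - Y₁` is independent of `V = (S₂(1), S₂(0))` given `G = 1`, further
conditioning on the `V`-event `{S₂(1) = 1}` leaves its mean unchanged. The same holds on the
control arm with `S₂(0)` and `Y₂(0)`. The complete-case DiD is therefore
`E[Y₂(1) - Y₁ | G = 1] - E[Y₂(0) - Y₁ | G = 0]`, and parallel trends replaces the second term
by `E[Y₂(0) - Y₁ | G = 1]`.
-/

open MeasureTheory ProbabilityTheory

/-- Conditional expectation of `X` given the event `A`. -/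
noncomputable def cE {Ω : Type*} [MeasurableSpace Ω] (μ : Measure Ω)
    (X : Ω → ℝ) (A : Set Ω) : ℝ :=
  (∫ ω in A, X ω ∂μ) / (μ A).toReal

section

variable {Ω : Type*} [MeasurableSpace Ω] {μ : Measure Ω}

lemma integral_cond (X : Ω → ℝ) (s : Set Ω) :
    ∫ ω, X ω ∂μ[|s] = ((μ s).toReal)⁻¹ * ∫ ω in s, X ω ∂μ := by
  rw [ProbabilityTheory.cond, integral_smul_measure, ENNReal.toReal_inv, smul_eq_mul]

lemma cE_eq_integral_cond (X : Ω → ℝ) (A : Set Ω) : cE μ X A = ∫ ω, X ω ∂μ[|A] := by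
  rw [cE, integral_cond, div_eq_inv_mul]

lemma cE_congr {X Y : Ω → ℝ} {A : Set Ω} (hA : MeasurableSet A) (h : Set.EqOn X Y A) :
    cE μ X A = cE μ Y A := by
  rw [cE, cE, setIntegral_congr_fun hA h]

lemma cE_sub {X Y : Ω → ℝ} (hX : Integrable X μ) (hY : Integrable Y μ) (A : Set Ω) :
    cE μ (fun ω => X ω - Y ω) A = cE μ X A - cE μ Y A := by
  rw [cE, cE, cE, integral_sub hX.restrict hY.restrict, sub_div]

lemma integral_cond_preimage_of_indepFun {β : Type*} [MeasurableSpace β] [IsProbabilityMeasure μ]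
    {X : Ω → ℝ} {T : Ω → β} (hXT : X ⟂ᵢ[μ] T) (hX : AEStronglyMeasurable X μ)
    (hT : Measurable T) {B : Set β} (hB : MeasurableSet B) (hTB : μ (T ⁻¹' B) ≠ 0) :
    ∫ ω, X ω ∂μ[|T ⁻¹' B] = ∫ ω, X ω ∂μ := by
  have hE : MeasurableSet (T ⁻¹' B) := hT hB
  have hXE : X ⟂ᵢ[μ] (fun ω => (T ⁻¹' B).indicator (1 : Ω → ℝ) ω) :=
    hXT.comp measurable_id (measurable_one.indicator hB)
  have hmean : ∫ ω in T ⁻¹' B, X ω ∂μ = (∫ ω, X ω ∂μ) * μ.real (T ⁻¹' B) := by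
    calc ∫ ω in T ⁻¹' B, X ω ∂μ
        = ∫ ω, X ω * (T ⁻¹' B).indicator (1 : Ω → ℝ) ω ∂μ := by
          rw [← integral_indicator hE]
          congr 1 with ω
          by_cases hω : ω ∈ T ⁻¹' B <;> simp [hω]
      _ = (∫ ω, X ω ∂μ) * ∫ ω, (T ⁻¹' B).indicator (1 : Ω → ℝ) ω ∂μ :=
          hXE.integral_fun_mul_eq_mul_integral hX (aestronglyMeasurable_const.indicator hE)
      _ = (∫ ω, X ω ∂μ) * μ.real (T ⁻¹' B) := by rw [integral_indicator_one hE]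
  have hpos : μ.real (T ⁻¹' B) ≠ 0 := (measureReal_ne_zero_iff).2 hTB
  rw [integral_cond, hmean, ← measureReal_def]
  field_simp

lemma cE_inter_preimage_of_indepFun [IsFiniteMeasure μ] {β : Type*} [MeasurableSpace β]
    {X : Ω → ℝ} {T : Ω → β} {A : Set Ω} {B : Set β} (hA : MeasurableSet A)
    (hT : Measurable T) (hB : MeasurableSet B) (hXT : X ⟂ᵢ[μ[|A]] T)
    (hX : AEStronglyMeasurable X μ) (hAB : μ (A ∩ T ⁻¹' B) ≠ 0) :
    cE μ X (A ∩ T ⁻¹' B) = cE μ X A := by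
  have : IsProbabilityMeasure μ[|A] :=
    cond_isProbabilityMeasure fun h => hAB (measure_mono_null Set.inter_subset_left h)
  rw [cE_eq_integral_cond, cE_eq_integral_cond, ← cond_cond_eq_cond_inter hA (hT hB)]
  exact integral_cond_preimage_of_indepFun hXT (hX.mono_ac cond_absolutelyContinuous) hT hB
    (cond_pos_of_inter_ne_zero hA hAB).ne'

end

theorem stmt_18_general {Ω : Type*} [MeasurableSpace Ω] (μ : Measure Ω) [IsProbabilityMeasure μ]
    (Y1 Y20 Y21 : Ω → ℝ) (S20 S21 : Ω → ℕ) (G : Ω → ℕ)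
    (hint1 : Integrable Y1 μ) (hint20 : Integrable Y20 μ) (hint21 : Integrable Y21 μ)
    (hmS20 : Measurable S20) (hmS21 : Measurable S21) (hmG : Measurable G)
    (hindep0 : ∀ g ∈ ({0, 1} : Set ℕ),
      IndepFun (fun ω => Y20 ω - Y1 ω) (fun ω => (S21 ω, S20 ω)) (μ[|{ω | G ω = g}]))
    (hindep1 : ∀ g ∈ ({0, 1} : Set ℕ),
      IndepFun (fun ω => Y21 ω - Y1 ω) (fun ω => (S21 ω, S20 ω)) (μ[|{ω | G ω = g}]))
    (hpt : cE μ (fun ω => Y20 ω - Y1 ω) {ω | G ω = 1}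
      = cE μ (fun ω => Y20 ω - Y1 ω) {ω | G ω = 0})
    (hpos1 : μ {ω | G ω = 1 ∧ (if G ω = 1 then S21 ω else S20 ω) = 1} ≠ 0)
    (hpos0 : μ {ω | G ω = 0 ∧ (if G ω = 1 then S21 ω else S20 ω) = 1} ≠ 0) :
    cE μ (fun ω => (if G ω = 1 then Y21 ω else Y20 ω) - Y1 ω)
        {ω | G ω = 1 ∧ (if G ω = 1 then S21 ω else S20 ω) = 1}
      - cE μ (fun ω => (if G ω = 1 then Y21 ω else Y20 ω) - Y1 ω)
          {ω | G ω = 0 ∧ (if G ω = 1 then S21 ω else S20 ω) = 1}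
      = cE μ (fun ω => Y21 ω - Y20 ω) {ω | G ω = 1} := by
  set T : Ω → ℕ × ℕ := fun ω => (S21 ω, S20 ω)
  have hT : Measurable T := hmS21.prodMk hmS20
  have hG : ∀ g, MeasurableSet {ω | G ω = g} := fun g => hmG (measurableSet_singleton g)
  have hsel1 : {ω | G ω = 1 ∧ (if G ω = 1 then S21 ω else S20 ω) = 1}
      = {ω | G ω = 1} ∩ T ⁻¹' {v | v.1 = 1} := by
    ext ω; by_cases h : G ω = 1 <;> simp [T, h]
  have hsel0 : {ω | G ω = 0 ∧ (if G ω = 1 then S21 ω else S20 ω) = 1}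
      = {ω | G ω = 0} ∩ T ⁻¹' {v | v.2 = 1} := by
    ext ω; by_cases h : G ω = 0 <;> simp [T, h]
  rw [hsel1] at hpos1 ⊢
  rw [hsel0] at hpos0 ⊢
  have hmB1 : MeasurableSet {v : ℕ × ℕ | v.1 = 1} := measurable_fst (measurableSet_singleton 1)
  have hmB0 : MeasurableSet {v : ℕ × ℕ | v.2 = 1} := measurable_snd (measurableSet_singleton 1)
  have htreated : cE μ (fun ω => (if G ω = 1 then Y21 ω else Y20 ω) - Y1 ω)
      ({ω | G ω = 1} ∩ T ⁻¹' {v | v.1 = 1}) = cE μ (fun ω => Y21 ω - Y1 ω) {ω | G ω = 1} := by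
    rw [cE_congr (Y := fun ω => Y21 ω - Y1 ω) ((hG 1).inter (hT hmB1))
      fun ω hω => by simp [show G ω = 1 from hω.1]]
    exact cE_inter_preimage_of_indepFun (hG 1) hT hmB1 (hindep1 1 (by simp))
      (hint21.sub hint1).aestronglyMeasurable hpos1
  have hcontrol : cE μ (fun ω => (if G ω = 1 then Y21 ω else Y20 ω) - Y1 ω)
      ({ω | G ω = 0} ∩ T ⁻¹' {v | v.2 = 1}) = cE μ (fun ω => Y20 ω - Y1 ω) {ω | G ω = 0} := by
    rw [cE_congr (Y := fun ω => Y20 ω - Y1 ω) ((hG 0).inter (hT hmB0))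
      fun ω hω => by simp [show G ω = 0 from hω.1]]
    exact cE_inter_preimage_of_indepFun (hG 0) hT hmB0 (hindep0 0 (by simp))
      (hint20.sub hint1).aestronglyMeasurable hpos0
  rw [htreated, hcontrol, ← hpt, ← cE_sub (X := fun ω => Y21 ω - Y1 ω)
    (Y := fun ω => Y20 ω - Y1 ω) (hint21.sub hint1) (hint20.sub hint1)]
  congr 1 with ω
  ring

/-- Equation (2) together with Assumption 5 of the paper: if sample selection is
ignorable — `(Y₂(w) - Y₁)` is independent of the stratum `V = (S₂(1), S₂(0))` given `G`
for `w ∈ {0,1}` — and parallel trends holds, then the complete-case DiD estimand equals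
the ATT. Observed outcomes: `Y₂ = G·Y₂(1)+(1-G)·Y₂(0)`, `S₂ = G·S₂(1)+(1-G)·S₂(0)`. -/
theorem stmt_18 {Ω : Type*} [MeasurableSpace Ω] (μ : Measure Ω) [IsProbabilityMeasure μ]
    (Y1 Y20 Y21 : Ω → ℝ) (S20 S21 : Ω → ℕ) (G : Ω → ℕ)
    (hint1 : Integrable Y1 μ) (hint20 : Integrable Y20 μ) (hint21 : Integrable Y21 μ)
    (hmY1 : Measurable Y1) (hmY20 : Measurable Y20) (hmY21 : Measurable Y21)
    (hmS20 : Measurable S20) (hmS21 : Measurable S21) (hmG : Measurable G)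
    (hS20 : ∀ ω, S20 ω ≤ 1) (hS21 : ∀ ω, S21 ω ≤ 1)
    (hindep0 : ∀ g ∈ ({0, 1} : Set ℕ),
      IndepFun (fun ω => Y20 ω - Y1 ω) (fun ω => (S21 ω, S20 ω)) (μ[|{ω | G ω = g}]))
    (hindep1 : ∀ g ∈ ({0, 1} : Set ℕ),
      IndepFun (fun ω => Y21 ω - Y1 ω) (fun ω => (S21 ω, S20 ω)) (μ[|{ω | G ω = g}]))
    (hpt : cE μ (fun ω => Y20 ω - Y1 ω) {ω | G ω = 1}
      = cE μ (fun ω => Y20 ω - Y1 ω) {ω | G ω = 0})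
    (hG1 : μ {ω | G ω = 1} ≠ 0)
    (hpos1 : μ {ω | G ω = 1 ∧ (if G ω = 1 then S21 ω else S20 ω) = 1} ≠ 0)
    (hpos0 : μ {ω | G ω = 0 ∧ (if G ω = 1 then S21 ω else S20 ω) = 1} ≠ 0) :
    cE μ (fun ω => (if G ω = 1 then Y21 ω else Y20 ω) - Y1 ω)
        {ω | G ω = 1 ∧ (if G ω = 1 then S21 ω else S20 ω) = 1}
      - cE μ (fun ω => (if G ω = 1 then Y21 ω else Y20 ω) - Y1 ω)
          {ω | G ω = 0 ∧ (if G ω = 1 then S21 ω else S20 ω) = 1}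
      = cE μ (fun ω => Y21 ω - Y20 ω) {ω | G ω = 1} :=
  stmt_18_general μ Y1 Y20 Y21 S20 S21 G hint1 hint20 hint21 hmS20 hmS21 hmG hindep0 hindep1 hpt
    hpos1 hpos0
end
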